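/- arXiv:2601.08685 — 2 statements merged into one kernel-verified Lean document; each statement's English description precedes it below -/
import Mathlib

section
/- Let H and H' be real inner product spaces, let M be a subset of H, let 0 ≤ δ < 1, and let Φ : H → H' be a linear map that is a δ-stable embedding of M ∪ (−M). Then for every ℓ, s ∈ M, |⟨Φℓ, Φs⟩ − ⟨ℓ, s⟩| ≤ (δ/2)(‖ℓ‖² + ‖s‖²). -/
open Pointwise

/-- Polarization: `4 ⟪u, v⟫ = ‖u + v‖² - ‖u - v‖²`, so the inner-product error is at most
`δ (‖u + v‖² + ‖u - v‖²) / 4 = δ (‖u‖² + ‖v‖²) / 2` by the parallelogram law. -/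
theorem abs_inner_map_sub_inner_le {H H' : Type*} [NormedAddCommGroup H] [InnerProductSpace ℝ H]
    [NormedAddCommGroup H'] [InnerProductSpace ℝ H'] (Φ : H →ₗ[ℝ] H') (δ : ℝ) (u v : H)
    (hadd : |‖Φ (u + v)‖ ^ 2 - ‖u + v‖ ^ 2| ≤ δ * ‖u + v‖ ^ 2)
    (hsub : |‖Φ (u - v)‖ ^ 2 - ‖u - v‖ ^ 2| ≤ δ * ‖u - v‖ ^ 2) :
    |(inner ℝ (Φ u) (Φ v) : ℝ) - inner ℝ u v| ≤ δ / 2 * (‖u‖ ^ 2 + ‖v‖ ^ 2) := by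
  rw [map_add, norm_add_sq_real, norm_add_sq_real] at hadd
  rw [map_sub, norm_sub_sq_real, norm_sub_sq_real] at hsub
  rw [abs_le] at hadd hsub ⊢
  constructor <;> linarith [hadd.1, hadd.2, hsub.1, hsub.2]

theorem abs_sub_le_mul_of_one_sub_mul_le_and_le_one_add_mul {a b δ : ℝ}
    (h : (1 - δ) * b ≤ a ∧ a ≤ (1 + δ) * b) : |a - b| ≤ δ * b :=
  abs_le.mpr ⟨by linarith [h.1], by linarith [h.2]⟩

theorem inner_preservation_of_stable_embedding_general
    {H H' : Type*} [NormedAddCommGroup H] [InnerProductSpace ℝ H]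
    [NormedAddCommGroup H'] [InnerProductSpace ℝ H']
    (M : Set H) (δ : ℝ)
    (Φ : H →ₗ[ℝ] H')
    (hΦ : ∀ x ∈ M ∪ -M, ∀ y ∈ M ∪ -M,
      (1 - δ) * ‖x - y‖ ^ 2 ≤ ‖Φ x - Φ y‖ ^ 2 ∧
        ‖Φ x - Φ y‖ ^ 2 ≤ (1 + δ) * ‖x - y‖ ^ 2)
    (ℓ s : H) (hℓ : ℓ ∈ M) (hs : s ∈ M) :
    |(inner ℝ (Φ ℓ) (Φ s) : ℝ) - (inner ℝ ℓ s : ℝ)| ≤ δ / 2 * (‖ℓ‖ ^ 2 + ‖s‖ ^ 2) := by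
  have hℓ' : ℓ ∈ M ∪ -M := Or.inl hℓ
  have hadd := hΦ ℓ hℓ' (-s) (Or.inr (Set.neg_mem_neg.mpr hs))
  have hsub := hΦ ℓ hℓ' s (Or.inl hs)
  rw [← map_sub, sub_neg_eq_add] at hadd
  rw [← map_sub] at hsub
  exact abs_inner_map_sub_inner_le Φ δ ℓ s
    (abs_sub_le_mul_of_one_sub_mul_le_and_le_one_add_mul hadd)
    (abs_sub_le_mul_of_one_sub_mul_le_and_le_one_add_mul hsub)

/-- **Preservation of inner products under stable embeddings.**
If `Φ` is a `δ`-stable embedding of `M ∪ (-M)`, then inner products between points of `M`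
are preserved up to `δ/2 (‖ℓ‖² + ‖s‖²)`. -/
theorem inner_preservation_of_stable_embedding
    {H H' : Type*} [NormedAddCommGroup H] [InnerProductSpace ℝ H]
    [NormedAddCommGroup H'] [InnerProductSpace ℝ H']
    (M : Set H) (δ : ℝ) (hδ0 : 0 ≤ δ) (hδ1 : δ < 1)
    (Φ : H →ₗ[ℝ] H')
    (hΦ : ∀ x ∈ M ∪ -M, ∀ y ∈ M ∪ -M,
      (1 - δ) * ‖x - y‖ ^ 2 ≤ ‖Φ x - Φ y‖ ^ 2 ∧
        ‖Φ x - Φ y‖ ^ 2 ≤ (1 + δ) * ‖x - y‖ ^ 2)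
    (ℓ s : H) (hℓ : ℓ ∈ M) (hs : s ∈ M) :
    |(inner ℝ (Φ ℓ) (Φ s) : ℝ) - (inner ℝ ℓ s : ℝ)| ≤ δ / 2 * (‖ℓ‖ ^ 2 + ‖s‖ ^ 2) :=
  inner_preservation_of_stable_embedding_general M δ Φ hΦ ℓ s hℓ hs
end

section
/- Let H and H' be real inner product spaces, let M be a subset of H, let 0 ≤ δ < 1, and let Φ : H → H' be a linear map that is a δ-stable embedding of M ∪ (−M). Then for every ℓ, s ∈ M, ⟨Φℓ, Φs⟩ ≥ ⟨ℓ, s⟩ − (δ/2)(‖ℓ‖² + ‖s‖²). -/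
open Pointwise

/-- Polarization: `4⟪u, v⟫ = ‖u + v‖² - ‖u - v‖²`, so a lower bound on `‖u + v‖` and an upper
bound on `‖u - v‖` bound `⟪u, v⟫` from below; the parallelogram law turns the distortion
`δ (‖x + y‖² + ‖x - y‖²) / 4` into `δ (‖x‖² + ‖y‖²) / 2`. -/
theorem real_inner_ge_of_norm_add_sq_ge_of_norm_sub_sq_le
    {E F : Type*} [NormedAddCommGroup E] [InnerProductSpace ℝ E]
    [NormedAddCommGroup F] [InnerProductSpace ℝ F]
    {x y : E} {u v : F} {δ : ℝ}
    (hadd : (1 - δ) * ‖x + y‖ ^ 2 ≤ ‖u + v‖ ^ 2)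
    (hsub : ‖u - v‖ ^ 2 ≤ (1 + δ) * ‖x - y‖ ^ 2) :
    inner ℝ x y - δ / 2 * (‖x‖ ^ 2 + ‖y‖ ^ 2) ≤ inner ℝ u v := by
  rw [norm_add_sq_real, norm_add_sq_real] at hadd
  rw [norm_sub_sq_real, norm_sub_sq_real] at hsub
  linear_combination (hadd + hsub) / 4

theorem inner_lower_bound_of_stable_embedding_general
    {H H' : Type*} [NormedAddCommGroup H] [InnerProductSpace ℝ H]
    [NormedAddCommGroup H'] [InnerProductSpace ℝ H']
    (M : Set H) (δ : ℝ)
    (Φ : H →ₗ[ℝ] H')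
    (hΦ : ∀ x ∈ M ∪ -M, ∀ y ∈ M ∪ -M,
      (1 - δ) * ‖x - y‖ ^ 2 ≤ ‖Φ x - Φ y‖ ^ 2 ∧
        ‖Φ x - Φ y‖ ^ 2 ≤ (1 + δ) * ‖x - y‖ ^ 2)
    (ℓ s : H) (hℓ : ℓ ∈ M) (hs : s ∈ M) :
    (inner ℝ (Φ ℓ) (Φ s) : ℝ) ≥ (inner ℝ ℓ s : ℝ) - δ / 2 * (‖ℓ‖ ^ 2 + ‖s‖ ^ 2) := by
  have hadd := (hΦ ℓ (.inl hℓ) (-s) (.inr (Set.neg_mem_neg.mpr hs))).1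
  rw [map_neg, sub_neg_eq_add, sub_neg_eq_add] at hadd
  exact real_inner_ge_of_norm_add_sq_ge_of_norm_sub_sq_le hadd (hΦ ℓ (.inl hℓ) s (.inl hs)).2

/-- **Lower bound on inner products under stable embeddings.** -/
theorem inner_lower_bound_of_stable_embedding
    {H H' : Type*} [NormedAddCommGroup H] [InnerProductSpace ℝ H]
    [NormedAddCommGroup H'] [InnerProductSpace ℝ H']
    (M : Set H) (δ : ℝ) (hδ0 : 0 ≤ δ) (hδ1 : δ < 1)
    (Φ : H →ₗ[ℝ] H')
    (hΦ : ∀ x ∈ M ∪ -M, ∀ y ∈ M ∪ -M,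
      (1 - δ) * ‖x - y‖ ^ 2 ≤ ‖Φ x - Φ y‖ ^ 2 ∧
        ‖Φ x - Φ y‖ ^ 2 ≤ (1 + δ) * ‖x - y‖ ^ 2)
    (ℓ s : H) (hℓ : ℓ ∈ M) (hs : s ∈ M) :
    (inner ℝ (Φ ℓ) (Φ s) : ℝ) ≥ (inner ℝ ℓ s : ℝ) - δ / 2 * (‖ℓ‖ ^ 2 + ‖s‖ ^ 2) :=
  inner_lower_bound_of_stable_embedding_general M δ Φ hΦ ℓ s hℓ hs
end
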